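/- arXiv:1010.4819 — 2 statements merged into one kernel-verified Lean document; each statement's English description precedes it below -/
import Mathlib

section
/- If C is a small category in which the only endomorphisms are identities and Hom(i,j) ≠ ∅ implies Hom(j,i) = ∅ for i ≠ j (i.e., C is a 'delta'), then the barycentric subdivision C' of C is a poset, i.e., between any two objects of C' there is at most one morphism, and the resulting relation is a partial order. -/
/-!
Whatever face `f` witnesses a morphism `τ → σ` of `C'`, its value is `τ(0 → f 0)` followed by
the identification `τ (f 0) = σ 0`. For two witnesses `f`, `g` with `f 0 ≤ g 0`, the two values
differ by `τ(f 0 → g 0)`, an endomorphism once the endpoints are identified, hence an identity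
when `C` has no nontrivial endomorphisms. Antisymmetry holds because strictly monotone maps
`[q] → [p]` and `[p] → [q]` force `p = q`, and a strictly monotone self-map of `[p]` is the
identity.
-/

open CategoryTheory

universe v u

/-- A `p`-simplex in a category `C`: a functor `[p] → C` where `[p] = {0 < ... < p}`
is realized as `Fin (p+1)` with its order category structure. -/
structure CatSimplex (C : Type u) [Category.{v} C] where
  dim : ℕ
  F : Fin (dim + 1) ⥤ C

variable {C : Type u} [Category.{v} C]

/-- A morphism `τ → σ` in the subdivision `C'` of `C`: a triple `[τ, σ, v]` where
`v = τ(0 → f 0)` for some monotone (strictly order-preserving) functor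
`f : [dim σ] → [dim τ]` with `τ ∘ f = σ`.  (The triple is determined by `v`,
together with its domain and codomain.) -/
def SubdivHom (τ σ : CatSimplex C) : Type v :=
  { v : τ.F.obj 0 ⟶ σ.F.obj 0 //
    ∃ (f : Fin (σ.dim + 1) →o Fin (τ.dim + 1)) (_ : StrictMono f)
      (hc : f.monotone.functor ⋙ τ.F = σ.F),
      v = τ.F.map (homOfLE (Fin.zero_le (f 0))) ≫
        eqToHom (congrArg (fun G : Fin (σ.dim + 1) ⥤ C => G.obj 0) hc) }

section EndomorphismFree

variable {J : Type*}

lemma map_homOfLE_eq_eqToHom [Preorder J] (hend : ∀ (i : C) (e : i ⟶ i), e = 𝟙 i)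
    (F : J ⥤ C) {i j : J} (h : i ≤ j) (e : F.obj i = F.obj j) :
    F.map (homOfLE h) = eqToHom e := by
  have := hend (F.obj i) (F.map (homOfLE h) ≫ eqToHom e.symm)
  rwa [comp_eqToHom_iff, Category.id_comp] at this

lemma map_homOfLE_comp_eqToHom_congr [LinearOrder J] (hend : ∀ (i : C) (e : i ⟶ i), e = 𝟙 i)
    (F : J ⥤ C) {a i j : J} (hi : a ≤ i) (hj : a ≤ j) {X : C}
    (ei : F.obj i = X) (ej : F.obj j = X) :
    F.map (homOfLE hi) ≫ eqToHom ei = F.map (homOfLE hj) ≫ eqToHom ej := by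
  wlog hij : i ≤ j generalizing i j
  · exact (this hj hi ej ei (le_of_not_ge hij)).symm
  have hcomp : homOfLE hj = homOfLE hi ≫ homOfLE hij := rfl
  rw [hcomp, Functor.map_comp, map_homOfLE_eq_eqToHom hend F hij (ei.trans ej.symm),
    Category.assoc, eqToHom_trans]

end EndomorphismFree

namespace SubdivHom

lemma subsingleton (hend : ∀ (i : C) (e : i ⟶ i), e = 𝟙 i) (τ σ : CatSimplex C) :
    Subsingleton (SubdivHom τ σ) :=
  ⟨fun ⟨_, _, _, _, hv₁⟩ ⟨_, _, _, _, hv₂⟩ => Subtype.ext <| hv₁.trans <|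
    (map_homOfLE_comp_eqToHom_congr hend τ.F _ _ _ _).trans hv₂.symm⟩

lemma nonempty_refl (τ : CatSimplex C) : Nonempty (SubdivHom τ τ) :=
  ⟨⟨_, OrderHom.id, strictMono_id, rfl, rfl⟩⟩

lemma nonempty_trans {τ σ ω : CatSimplex C} (φ : SubdivHom τ σ) (ψ : SubdivHom σ ω) :
    Nonempty (SubdivHom τ ω) := by
  obtain ⟨_, f, hf, hcf, -⟩ := φ
  obtain ⟨_, g, hg, hcg, -⟩ := ψ
  have hcomp : (f.comp g).monotone.functor ⋙ τ.F = ω.F := by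
    change g.monotone.functor ⋙ f.monotone.functor ⋙ τ.F = ω.F
    rw [hcf, hcg]
  exact ⟨⟨_, f.comp g, hf.comp hg, hcomp, rfl⟩⟩

lemma dim_le {τ σ : CatSimplex C} (φ : SubdivHom τ σ) : σ.dim ≤ τ.dim := by
  obtain ⟨_, f, hf, -, -⟩ := φ
  exact Nat.succ_le_succ_iff.mp (Fin.le_of_injective f hf.injective)

lemma eq_of_dim_le {τ σ : CatSimplex C} (φ : SubdivHom τ σ) (h : τ.dim ≤ σ.dim) : τ = σ := by
  obtain ⟨p, τF⟩ := τ
  obtain ⟨q, σF⟩ := σ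
  obtain rfl : p = q := le_antisymm h φ.dim_le
  obtain ⟨_, f, hf, hcf, -⟩ := φ
  obtain rfl : f = OrderHom.id := OrderHom.ext _ _ hf.eq_id
  exact congrArg (CatSimplex.mk p) hcf

end SubdivHom

theorem subdivision_of_delta_isPoset_general
    (hend : ∀ (i : C) (e : i ⟶ i), e = 𝟙 i) :
    (∀ τ σ : CatSimplex C, Subsingleton (SubdivHom τ σ)) ∧
    (∀ τ : CatSimplex C, Nonempty (SubdivHom τ τ)) ∧
    (∀ τ σ ω : CatSimplex C,
      Nonempty (SubdivHom τ σ) → Nonempty (SubdivHom σ ω) → Nonempty (SubdivHom τ ω)) ∧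
    (∀ τ σ : CatSimplex C,
      Nonempty (SubdivHom τ σ) → Nonempty (SubdivHom σ τ) → τ = σ) :=
  ⟨SubdivHom.subsingleton hend, SubdivHom.nonempty_refl,
    fun _ _ _ ⟨φ⟩ ⟨ψ⟩ => φ.nonempty_trans ψ,
    fun _ _ ⟨φ⟩ ⟨ψ⟩ => φ.eq_of_dim_le ψ.dim_le⟩

/-- If `C` is a delta (the only endomorphisms are identities and
`Hom(i,j) ≠ ∅ → Hom(j,i) = ∅` for `i ≠ j`), then the subdivision `C'` is a poset:
there is at most one morphism between any two simplices, and the relation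
"there exists a morphism" is reflexive, transitive and antisymmetric. -/
theorem subdivision_of_delta_isPoset
    (hend : ∀ (i : C) (e : i ⟶ i), e = 𝟙 i)
    (hasym : ∀ i j : C, i ≠ j → Nonempty (i ⟶ j) → IsEmpty (j ⟶ i)) :
    (∀ τ σ : CatSimplex C, Subsingleton (SubdivHom τ σ)) ∧
    (∀ τ : CatSimplex C, Nonempty (SubdivHom τ τ)) ∧
    (∀ τ σ ω : CatSimplex C,
      Nonempty (SubdivHom τ σ) → Nonempty (SubdivHom σ ω) → Nonempty (SubdivHom τ ω)) ∧
    (∀ τ σ : CatSimplex C,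
      Nonempty (SubdivHom τ σ) → Nonempty (SubdivHom σ τ) → τ = σ) :=
  subdivision_of_delta_isPoset_general hend
end

section
/- For any right-bounded complex P• of relative projective A-modules and any right-bounded complex Q• of A-modules, the canonical map Mor_{K^-(A-mod)}(P•, Q•) → Mor_{D^-_k(A-mod)}(P•, Q•) from homotopy classes of chain maps to morphisms in the relative derived category is an isomorphism. -/
open CategoryTheory

universe w v u w2 v2

/-- A diagram of `k`-algebras over a small category `C`: a presheaf of unital
associative `k`-algebras, with `φ v : A^{cv} → A^{dv}` for each morphism `v`. -/
structure Diagram (k : Type u) [CommRing k] (C : Type v) [Category.{w} C] where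
  A : C → Type u
  [ringA : ∀ i, Ring (A i)]
  [algA : ∀ i, Algebra k (A i)]
  φ : ∀ {h i : C}, (h ⟶ i) → (A i →ₐ[k] A h)
  φ_id : ∀ i : C, φ (𝟙 i) = AlgHom.id k (A i)
  φ_comp : ∀ {h i j : C} (u : h ⟶ i) (v : i ⟶ j), φ (u ≫ v) = (φ u).comp (φ v)

attribute [instance] Diagram.ringA Diagram.algA

variable {k : Type u} [CommRing k] {C : Type v} [Category.{w} C]

/-- A left module over a diagram `𝔸`: a presheaf of abelian groups `M` with
`M^i` an `𝔸^i`-module and `T^v : M^{cv} → M^{dv}` additive and `φ^v`-semilinear. -/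
structure DMod (𝔸 : Diagram k C) where
  M : C → Type u
  [acg : ∀ i, AddCommGroup (M i)]
  [mod : ∀ i, Module (𝔸.A i) (M i)]
  T : ∀ {h i : C}, (h ⟶ i) → (M i →+ M h)
  T_smul : ∀ {h i : C} (v : h ⟶ i) (a : 𝔸.A i) (m : M i),
    T v (a • m) = 𝔸.φ v a • T v m
  T_id : ∀ i : C, T (𝟙 i) = AddMonoidHom.id (M i)
  T_comp : ∀ {h i j : C} (u : h ⟶ i) (v : i ⟶ j), T (u ≫ v) = (T u).comp (T v)

attribute [instance] DMod.acg DMod.mod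

variable {𝔸 : Diagram k C}

/-- A morphism of `𝔸`-modules: a natural transformation which is objectwise
`𝔸^i`-linear. -/
@[ext]
structure DModHom (M N : DMod 𝔸) where
  app : ∀ i : C, M.M i →+ N.M i
  app_smul : ∀ (i : C) (a : 𝔸.A i) (m : M.M i), app i (a • m) = a • app i m
  naturality : ∀ {h i : C} (v : h ⟶ i) (m : M.M i), app h (M.T v m) = N.T v (app i m)

instance : Category (DMod 𝔸) where
  Hom := DModHom
  id M := ⟨fun i => AddMonoidHom.id _, fun _ _ _ => rfl, fun _ _ => rfl⟩
  comp f g := ⟨fun i => (g.app i).comp (f.app i),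
    fun i a m => by simp [f.app_smul, g.app_smul],
    fun v m => by simp [f.naturality, g.naturality]⟩

@[ext]
lemma DModHom.hext {M N : DMod 𝔸} {f g : M ⟶ N}
    (h : ∀ (i : C) (m : M.M i), f.app i m = g.app i m) : f = g := by
  have happ : f.app = g.app := by
    funext i; ext m; exact h i m
  exact DModHom.ext happ

instance {M N : DMod 𝔸} : Zero (M ⟶ N) :=
  ⟨⟨fun _ => 0, fun i a m => by simp, fun v m => by simp⟩⟩

instance {M N : DMod 𝔸} : Add (M ⟶ N) :=
  ⟨fun f g => ⟨fun i => f.app i + g.app i,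
    fun i a m => by simp [f.app_smul, g.app_smul, smul_add],
    fun v m => by simp [f.naturality, g.naturality]⟩⟩

instance {M N : DMod 𝔸} : Neg (M ⟶ N) :=
  ⟨fun f => ⟨fun i => -(f.app i),
    fun i a m => by simp [f.app_smul],
    fun v m => by simp [f.naturality]⟩⟩

instance {M N : DMod 𝔸} : AddCommGroup (M ⟶ N) where
  add_assoc f g h := by ext i m; exact add_assoc _ _ _
  zero_add f := by ext i m; exact zero_add _
  add_zero f := by ext i m; exact add_zero _
  add_comm f g := by ext i m; exact add_comm _ _
  neg_add_cancel f := by ext i m; exact neg_add_cancel _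
  nsmul := nsmulRec
  zsmul := zsmulRec

instance : Preadditive (DMod 𝔸) where
  add_comp := by intros; apply DModHom.hext; intro i m; exact map_add (_ : _ →+ _) _ _
  comp_add := by intros; apply DModHom.hext; intros; rfl

/-- The `k`-module structure on each `M^i`, via the algebra map `k → 𝔸^i`. -/
instance kMod (M : DMod 𝔸) (i : C) : Module k (M.M i) :=
  Module.compHom (M.M i) (algebraMap k (𝔸.A i))

/-- A morphism of `𝔸`-modules is allowable if each `η^i` admits a `k`-linear map
`s^i` with `η^i ∘ s^i ∘ η^i = η^i`. -/
def Allowable {M N : DMod 𝔸} (f : M ⟶ N) : Prop :=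
  ∀ i : C, ∃ s : N.M i →ₗ[k] M.M i, ∀ m : M.M i, f.app i (s (f.app i m)) = f.app i m

/-- An `𝔸`-module `P` is relative projective if every allowable epimorphism lifts
maps from `P`. -/
def RelProjective (P : DMod 𝔸) : Prop :=
  ∀ (M N : DMod 𝔸) (e : M ⟶ N), Allowable e → (∀ i, Function.Surjective (e.app i)) →
    ∀ g : P ⟶ N, ∃ h : P ⟶ M, h ≫ e = g

/-- The underlying `k`-linear map of `f^i`. -/
def DModHom.kLinear {M N : DMod 𝔸} (f : M ⟶ N) (i : C) : M.M i →ₗ[k] N.M i where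
  toFun := f.app i
  map_add' := map_add _
  map_smul' := fun a m => f.app_smul i (algebraMap k (𝔸.A i) a) m

/-- The complex of `k`-modules obtained from a complex of `𝔸`-modules by
evaluating at an object `i` of `C` (and restricting scalars to `k`). -/
noncomputable def evalCx (X : ChainComplex (DMod 𝔸) ℕ) (i : C) :
    ChainComplex (ModuleCat.{u} k) ℕ where
  X n := ModuleCat.of k ((X.X n).M i)
  d n m := ModuleCat.ofHom (DModHom.kLinear (X.d n m) i)
  shape n m h := by
    ext x
    exact congrArg (fun g : DModHom _ _ => g.app i x) (X.shape n m h)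
  d_comp_d' n m l _ _ := by
    ext x
    exact congrArg (fun g : DModHom _ _ => g.app i x) (X.d_comp_d n m l)

/-- Evaluation of a chain map at an object `i` of `C`. -/
noncomputable def evalMap {X Y : ChainComplex (DMod 𝔸) ℕ} (f : X ⟶ Y) (i : C) :
    evalCx X i ⟶ evalCx Y i where
  f n := ModuleCat.ofHom (DModHom.kLinear (f.f n) i)
  comm' n m _ := by
    ext x
    exact congrArg (fun g : DModHom _ _ => g.app i x) (f.comm n m)

/-- A map of complexes of `𝔸`-modules is a relative quasi-isomorphism if, for every
object `i` of `C`, its cone, regarded as a complex of `k`-modules, is contractible. -/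
noncomputable def RelQIsoCx {X Y : ChainComplex (DMod 𝔸) ℕ} (f : X ⟶ Y) : Prop :=
  ∀ i : C, Nonempty (Homotopy (𝟙 (HomologicalComplex.homotopyCofiber (evalMap f i))) 0)

/-- The class `Σ` of relative quasi-isomorphisms, as a class of morphisms of the
homotopy category `K^-(𝔸-mod)`. -/
noncomputable def RelQIsoW (𝔸 : Diagram k C) :
    MorphismProperty (HomotopyCategory (DMod 𝔸) (ComplexShape.down ℕ)) :=
  fun X Y g => ∃ g₀ : X.as ⟶ Y.as,
    (HomotopyCategory.quotient _ _).map g₀ = g ∧ RelQIsoCx g₀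

/-- The relative derived category `D^-_k(𝔸-mod)`: the localization of the homotopy
category `K^-(𝔸-mod)` at the class of relative quasi-isomorphisms. -/
noncomputable abbrev DerivedDMod (𝔸 : Diagram k C) := (RelQIsoW 𝔸).Localization


/-!
The mapping cone of a relative quasi-isomorphism `s : X ⟶ Y` becomes contractible after evaluation
at every object of `C`. The contracting homotopy splits every boundary map of the cone onto its
cycles `k`-linearly, so these maps are allowable epimorphisms, and relative projectivity lifts
through them degree by degree. Thus every chain map from a complex `P` of relative projectives into
the cone is null-homotopic, and so is every chain map into the desuspended cone that lands in cycles
in degree `0`. Reading off the components of these null-homotopies shows that composition with `s`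
is a bijection on homotopy classes of maps out of `P`. So `P` is colocal for the relative
quasi-isomorphisms, and maps out of a colocal object do not change under localization.
-/

open HomologicalComplex Limits

namespace CategoryTheory.Localization

theorem map_bijective_of_le_isColocal {𝒞 𝒟 : Type*} [Category 𝒞] [Category 𝒟] (L : 𝒞 ⥤ 𝒟)
    (W : MorphismProperty 𝒞) [L.IsLocalization W] {P : ObjectProperty 𝒞} (hW : W ≤ P.isColocal)
    {X : 𝒞} (hX : P X) (Y : 𝒞) :
    Function.Bijective (fun f : X ⟶ Y => L.map f) := by
  constructor
  · intro f₁ f₂ (h : L.map f₁ = L.map f₂)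
    let F := coyoneda.obj (Opposite.op X)
    have hF : W.IsInvertedBy F := fun _ _ w hw =>
      (isIso_iff_bijective (F.map w)).2 (hW w hw X hX)
    have hmap : F.map f₁ = F.map f₂ := by
      rw [← NatIso.naturality_1 (fac F hF L) f₁, ← NatIso.naturality_1 (fac F hF L) f₂,
        Functor.comp_map, Functor.comp_map, h]
    simpa [F] using ConcreteCategory.congr_hom hmap (𝟙 X)
  · intro φ
    refine induction_structuredArrow L W (fun g => ∃ f : X ⟶ g.right, L.map f = g.hom)
      ⟨𝟙 X, L.map_id X⟩ ?_ ?_ (StructuredArrow.mk φ)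
    · rintro Y₁ Y₂ f φ ⟨f₁, hf₁ : L.map f₁ = φ⟩
      exact ⟨f₁ ≫ f, by simp [hf₁]⟩
    · rintro Y₁ Y₂ w hw φ ⟨f₂, hf₂ : L.map f₂ = φ⟩
      obtain ⟨f₁, rfl⟩ := (hW w hw X hX).2 f₂
      exact ⟨f₁, by simp [← hf₂]⟩

end CategoryTheory.Localization

section ChainComplexes

variable {V : Type*} [Category V] [Preadditive V]

lemma HomologicalComplex.nonempty_homotopy_id_zero_of_iso {ι : Type*} {c : ComplexShape ι}
    {K L : HomologicalComplex V c} (e : K ≅ L) (H : Homotopy (𝟙 L) 0) :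
    Nonempty (Homotopy (𝟙 K) 0) :=
  ⟨(Homotopy.ofEq (by simp)).trans
    (((H.compLeft e.hom).compRight e.inv).trans (Homotopy.ofEq (by simp)))⟩

namespace Homotopy

variable {P Q : ChainComplex V ℕ} {f g : P ⟶ Q}

lemma comm_chainComplex_zero (H : Homotopy f g) :
    f.f 0 = H.hom 0 1 ≫ Q.d 1 0 + g.f 0 := by
  simpa only [dNext_zero_chainComplex, prevD_chainComplex, zero_add] using H.comm 0

lemma comm_chainComplex_succ (H : Homotopy f g) (n : ℕ) :
    f.f (n + 1) = P.d (n + 1) n ≫ H.hom n (n + 1) +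
      H.hom (n + 1) (n + 2) ≫ Q.d (n + 2) (n + 1) + g.f (n + 1) := by
  simpa only [dNext_succ_chainComplex, prevD_chainComplex] using H.comm (n + 1)

noncomputable def mkOfComponents (h : ∀ n, P.X n ⟶ Q.X (n + 1))
    (h₀ : f.f 0 = h 0 ≫ Q.d 1 0 + g.f 0)
    (hsucc : ∀ n, f.f (n + 1) = P.d (n + 1) n ≫ h n + h (n + 1) ≫ Q.d (n + 2) (n + 1) +
      g.f (n + 1)) :
    Homotopy f g :=
  let h' : ∀ i j, (ComplexShape.down ℕ).Rel j i → (P.X i ⟶ Q.X j) :=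
    fun i j hij => h i ≫ eqToHom (congrArg Q.X (show i + 1 = j from hij))
  equivSubZero.symm <| (Homotopy.ofEq (by
    ext (_ | n)
    · rw [nullHomotopicMap'_f_of_not_rel_left (k₁ := 1) rfl (by simp)]
      simp [h', h₀]
    · rw [nullHomotopicMap'_f (k₂ := n + 2) rfl rfl]
      simp [h', hsucc])).trans (nullHomotopy' h')

end Homotopy

namespace ChainComplex

abbrev desusp (K : ChainComplex V ℕ) : ChainComplex V ℕ where
  X n := K.X (n + 1)
  d i j := -K.d (i + 1) (j + 1)
  shape i j h := by
    rw [K.shape, neg_zero]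
    simpa using h
  d_comp_d' := by intros; simp

lemma nonempty_homotopy_zero_of_exists_lift {P Z : ChainComplex V ℕ} (f : P ⟶ Z)
    (g₀ : P.X 0 ⟶ Z.X 1) (hg₀ : f.f 0 = g₀ ≫ Z.d 1 0)
    (hlift : ∀ n b (w : P.X n ⟶ Z.X (b + 1)), w ≫ Z.d (b + 1) b = 0 →
      ∃ g : P.X n ⟶ Z.X (b + 2), g ≫ Z.d (b + 2) (b + 1) = w) :
    Nonempty (Homotopy f 0) := by
  have extend : ∀ m (x : P.X m ⟶ Z.X (m + 1)),
      P.d (m + 1) m ≫ (f.f m - x ≫ Z.d (m + 1) m) = 0 →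
      ∃ y : P.X (m + 1) ⟶ Z.X (m + 2),
        f.f (m + 1) = P.d (m + 1) m ≫ x + y ≫ Z.d (m + 2) (m + 1) := by
    intro m x hx
    obtain ⟨y, hy⟩ := hlift (m + 1) m (f.f (m + 1) - P.d (m + 1) m ≫ x) (by
      rw [Preadditive.sub_comp, Category.assoc, f.comm, ← Preadditive.comp_sub, hx])
    exact ⟨y, by rw [hy, add_sub_cancel]⟩
  choose next hnext using extend
  have h₀ : P.d 1 0 ≫ (f.f 0 - g₀ ≫ Z.d 1 0) = 0 := by rw [hg₀, sub_self, comp_zero]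
  exact ⟨Homotopy.mkInductive f g₀ hg₀ (next 0 g₀ h₀) (hnext 0 g₀ h₀) fun n ⟨x, y, hxy⟩ =>
    have hy : P.d (n + 2) (n + 1) ≫ (f.f (n + 1) - y ≫ Z.d (n + 2) (n + 1)) = 0 := by
      rw [hxy, add_sub_cancel_right, P.d_comp_d_assoc, zero_comp]
    ⟨next (n + 1) y hy, hnext (n + 1) y hy⟩⟩

end ChainComplex

namespace HomologicalComplex.homotopyCofiber

variable {X Y P : ChainComplex V ℕ} (s : X ⟶ Y) [HasHomotopyCofiber s]

lemma exists_homotopy_of_homotopy_comp_inr (u : P ⟶ Y) (H : Homotopy (u ≫ inr s) 0) :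
    ∃ v : P ⟶ X, Nonempty (Homotopy (v ≫ s) u) := by
  let v : P ⟶ X :=
    { f n := H.hom n (n + 1) ≫ fstX s (n + 1) n rfl
      comm' := by
        rintro _ n rfl
        have := H.comm_chainComplex_succ n =≫ fstX s (n + 1) n rfl
        simp only [comp_f, inr_f, Category.assoc, inrX_fstX s (n + 1) n rfl, comp_zero,
          homotopyCofiber_d, zero_f, add_zero, Preadditive.add_comp,
          d_fstX s (n + 2) (n + 1) n rfl rfl, Preadditive.comp_neg] at this
        rw [Category.assoc]
        exact (add_neg_eq_zero.mp this.symm).symm }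
  refine ⟨v, ⟨Homotopy.mkOfComponents (fun n => -(H.hom n (n + 1) ≫ sndX s (n + 1))) ?_ ?_⟩⟩
  · have := H.comm_chainComplex_zero =≫ sndX s 0
    simp only [comp_f, inr_f, Category.assoc, inrX_sndX, Category.comp_id, homotopyCofiber_d,
      zero_f, add_zero, d_sndX s 1 0 rfl, Preadditive.comp_add] at this
    simp [v, this]
  · intro n
    have := H.comm_chainComplex_succ n =≫ sndX s (n + 1)
    simp only [comp_f, inr_f, Category.assoc, inrX_sndX, Category.comp_id, homotopyCofiber_d,
      zero_f, add_zero, Preadditive.add_comp, d_sndX s (n + 2) (n + 1) rfl,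
      Preadditive.comp_add] at this
    rw [this]
    simp only [comp_f, Category.assoc, Preadditive.comp_neg, Preadditive.neg_comp, v]
    abel

/-- A null-homotopy of `v ≫ s` is a lift of `v` to the homotopy fibre of `s`. -/
noncomputable def fiberLift (v : P ⟶ X) (H : Homotopy (v ≫ s) 0) :
    P ⟶ ChainComplex.desusp (homotopyCofiber s) where
  f n := v.f n ≫ inlX s n (n + 1) rfl - H.hom n (n + 1) ≫ inrX s (n + 1)
  comm' := by
    rintro _ n rfl
    have hH : v.f (n + 1) ≫ s.f (n + 1) =
        P.d (n + 1) n ≫ H.hom n (n + 1) + H.hom (n + 1) (n + 2) ≫ Y.d (n + 2) (n + 1) := by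
      simpa using H.comm_chainComplex_succ n
    change (v.f (n + 1) ≫ inlX s (n + 1) (n + 2) rfl - H.hom (n + 1) (n + 2) ≫ inrX s (n + 2)) ≫
      (-d s (n + 2) (n + 1)) =
        P.d (n + 1) n ≫ (v.f n ≫ inlX s n (n + 1) rfl - H.hom n (n + 1) ≫ inrX s (n + 1))
    simp only [Preadditive.sub_comp, Preadditive.comp_neg, Category.assoc,
      inlX_d s (n + 2) (n + 1) n rfl rfl, inrX_d, Preadditive.comp_add, reassoc_of% hH,
      reassoc_of% (v.comm (n + 1) n), Preadditive.comp_sub, Preadditive.add_comp]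
    abel

lemma fiberLift_f_zero_comp_d (v : P ⟶ X) (H : Homotopy (v ≫ s) 0) :
    (fiberLift s v H).f 0 ≫ (homotopyCofiber s).d 1 0 = 0 := by
  have hH : v.f 0 ≫ s.f 0 = H.hom 0 1 ≫ Y.d 1 0 := by simpa using H.comm_chainComplex_zero
  change (v.f 0 ≫ inlX s 0 1 rfl - H.hom 0 1 ≫ inrX s 1) ≫ d s 1 0 = 0
  rw [Preadditive.sub_comp, Category.assoc, Category.assoc, inlX_d' s 1 0 rfl (by simp), inrX_d,
    reassoc_of% hH, sub_self]

lemma fiberLift_f_fstX (v : P ⟶ X) (H : Homotopy (v ≫ s) 0) (n : ℕ) :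
    (fiberLift s v H).f n ≫ fstX s (n + 1) n rfl = v.f n := by
  change (v.f n ≫ inlX s n (n + 1) rfl - H.hom n (n + 1) ≫ inrX s (n + 1)) ≫
    fstX s (n + 1) n rfl = v.f n
  rw [Preadditive.sub_comp, Category.assoc, Category.assoc, inlX_fstX s n (n + 1) rfl,
    inrX_fstX s (n + 1) n rfl, Category.comp_id, comp_zero, sub_zero]

lemma desusp_d_fstX (n : ℕ) :
    (ChainComplex.desusp (homotopyCofiber s)).d (n + 1) n ≫ fstX s (n + 1) n rfl =
      fstX s (n + 2) (n + 1) rfl ≫ X.d (n + 1) n := by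
  simp [d_fstX s (n + 2) (n + 1) n rfl rfl]

lemma nonempty_homotopy_zero_of_homotopy_fiberLift (v : P ⟶ X) (H : Homotopy (v ≫ s) 0)
    (H' : Homotopy (fiberLift s v H) 0) : Nonempty (Homotopy v 0) := by
  refine ⟨Homotopy.mkOfComponents (fun n => H'.hom n (n + 1) ≫ fstX s (n + 2) (n + 1) rfl) ?_ ?_⟩
  · have := H'.comm_chainComplex_zero =≫ fstX s 1 0 rfl
    rw [fiberLift_f_fstX, zero_f, add_zero, Category.assoc, desusp_d_fstX] at this
    rw [this, zero_f, add_zero, Category.assoc]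
  · intro n
    have := H'.comm_chainComplex_succ n =≫ fstX s (n + 2) (n + 1) rfl
    rw [fiberLift_f_fstX, zero_f, add_zero, Preadditive.add_comp, Category.assoc,
      Category.assoc, desusp_d_fstX] at this
    rw [this, zero_f, add_zero, Category.assoc]

end HomologicalComplex.homotopyCofiber

end ChainComplexes

lemma Homotopy.d_hom_apply_of_dFrom_eq_zero {R : Type*} [Ring R]
    {K : ChainComplex (ModuleCat R) ℕ} (H : Homotopy (𝟙 K) 0) {b : ℕ} (x : K.X b)
    (hx : K.dFrom b x = 0) :
    K.d (b + 1) b (H.hom b (b + 1) x) = x := by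
  have h := ConcreteCategory.congr_hom (H.comm b) x
  rw [prevD_chainComplex] at h
  simpa [dNext, hx] using h.symm

def DModHom.linear {M N : DMod 𝔸} (f : M ⟶ N) (i : C) : M.M i →ₗ[𝔸.A i] N.M i where
  toFun := f.app i
  map_add' := map_add _
  map_smul' := f.app_smul i

namespace DMod

variable (M N : DMod 𝔸)

def prod : DMod 𝔸 where
  M i := M.M i × N.M i
  T v := (M.T v).prodMap (N.T v)
  T_smul v a m := Prod.ext (M.T_smul v a m.1) (N.T_smul v a m.2)
  T_id i := by ext m <;> simp [M.T_id, N.T_id]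
  T_comp u v := by ext m <;> simp [M.T_comp, N.T_comp]

def biprodBicone : BinaryBicone M N where
  pt := M.prod N
  fst := ⟨fun _ => AddMonoidHom.fst _ _, fun _ _ _ => rfl, fun _ _ => rfl⟩
  snd := ⟨fun _ => AddMonoidHom.snd _ _, fun _ _ _ => rfl, fun _ _ => rfl⟩
  inl := ⟨fun _ => AddMonoidHom.inl _ _, fun _ a _ => Prod.ext rfl (smul_zero a).symm,
    fun v _ => Prod.ext rfl (map_zero (N.T v)).symm⟩
  inr := ⟨fun _ => AddMonoidHom.inr _ _, fun _ a _ => Prod.ext (smul_zero a).symm rfl,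
    fun v _ => Prod.ext (map_zero (M.T v)).symm rfl⟩
  inl_fst := by ext; rfl
  inl_snd := by ext; rfl
  inr_fst := by ext; rfl
  inr_snd := by ext; rfl

instance : HasBinaryBiproducts (DMod 𝔸) where
  has_binary_biproduct M N := hasBinaryBiproduct_of_total (biprodBicone M N) (by
    ext i ⟨x, y⟩
    exact Prod.ext (add_zero x) (zero_add y))

variable {M N}

def ker (f : M ⟶ N) : DMod 𝔸 where
  M i := LinearMap.ker (f.linear i)
  T v := AddMonoidHom.codRestrict ((M.T v).comp (LinearMap.ker _).subtype.toAddMonoidHom) _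
    fun x => by
      change f.app _ (M.T v x) = 0
      rw [f.naturality, show f.app _ x.1 = 0 from LinearMap.mem_ker.mp x.2, map_zero]
  T_smul v a x := Subtype.ext (M.T_smul v a x)
  T_id i := AddMonoidHom.ext fun x => Subtype.ext (DFunLike.congr_fun (M.T_id i) x.1)
  T_comp u v := AddMonoidHom.ext fun x => Subtype.ext (DFunLike.congr_fun (M.T_comp u v) x.1)

def kerι (f : M ⟶ N) : ker f ⟶ M :=
  ⟨fun _ => (LinearMap.ker _).subtype.toAddMonoidHom, fun _ _ _ => rfl, fun _ _ => rfl⟩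

def kerLift {L : DMod 𝔸} (f : M ⟶ N) (g : L ⟶ M) (hg : g ≫ f = 0) : L ⟶ ker f :=
  ⟨fun i => (g.app i).codRestrict _ fun x => congrArg (fun φ : L ⟶ N => φ.app i x) hg,
    fun i a x => Subtype.ext (g.app_smul i a x), fun v x => Subtype.ext (g.naturality v x)⟩

@[simp]
lemma kerLift_kerι {L : DMod 𝔸} (f : M ⟶ N) (g : L ⟶ M) (hg : g ≫ f = 0) :
    kerLift f g hg ≫ kerι f = g := by
  ext
  rfl

noncomputable def eval (i : C) : DMod 𝔸 ⥤ ModuleCat.{u} k where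
  obj M := ModuleCat.of k (M.M i)
  map f := ModuleCat.ofHom (f.kLinear i)

instance (i : C) : (eval (𝔸 := 𝔸) i).Additive where
  map_add := rfl

end DMod

def ObjectwiseContractible (Z : ChainComplex (DMod 𝔸) ℕ) : Prop :=
  ∀ i, Nonempty (Homotopy (𝟙 (evalCx Z i)) 0)

lemma RelQIsoCx.objectwiseContractible_homotopyCofiber {X Y : ChainComplex (DMod 𝔸) ℕ}
    {s : X ⟶ Y} (hs : RelQIsoCx s) : ObjectwiseContractible (homotopyCofiber s) := fun i =>
  nonempty_homotopy_id_zero_of_iso (homotopyCofiber.mapHomologicalComplexObjIso s (DMod.eval i))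
    (hs i).some

namespace ObjectwiseContractible

variable {Z P : ChainComplex (DMod 𝔸) ℕ}

lemma exists_comp_d_eq (hZ : ObjectwiseContractible Z) {M : DMod 𝔸} (hM : RelProjective M)
    (b : ℕ) (w : M ⟶ Z.X b) (hw : w ≫ Z.dFrom b = 0) :
    ∃ g : M ⟶ Z.X (b + 1), g ≫ Z.d (b + 1) b = w := by
  let e := DMod.kerLift (Z.dFrom b) (Z.d (b + 1) b) (Z.d_comp_d _ _ _)
  -- the contracting homotopy at `i` is a `k`-linear section of `e`, so `e` is allowable
  have hsection : ∀ i (x : (DMod.ker (Z.dFrom b)).M i),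
      e.app i ((hZ i).some.hom b (b + 1) x.1) = x := fun i x =>
    Subtype.ext ((hZ i).some.d_hom_apply_of_dFrom_eq_zero x.1 (LinearMap.mem_ker.mp x.2))
  obtain ⟨g, hg⟩ := hM _ _ e
    (fun i => ⟨((hZ i).some.hom b (b + 1)).hom ∘ₗ (DMod.kerι _).kLinear i,
      fun m => hsection i (e.app i m)⟩)
    (fun i x => ⟨_, hsection i x⟩) (DMod.kerLift _ w hw)
  exact ⟨g, by rw [← DMod.kerLift_kerι _ w hw, ← hg, Category.assoc, DMod.kerLift_kerι]⟩

lemma nonempty_homotopy_zero (hZ : ObjectwiseContractible Z) (hP : ∀ n, RelProjective (P.X n))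
    (f : P ⟶ Z) : Nonempty (Homotopy f 0) := by
  obtain ⟨g₀, hg₀⟩ := hZ.exists_comp_d_eq (hP 0) 0 (f.f 0)
    (by rw [Z.dFrom_eq_zero (by simp), comp_zero])
  exact ChainComplex.nonempty_homotopy_zero_of_exists_lift f g₀ hg₀.symm fun n b w hw =>
    hZ.exists_comp_d_eq (hP n) (b + 1) w
      (by rw [Z.dFrom_eq rfl, ← Category.assoc, hw, zero_comp])

lemma nonempty_homotopy_zero_desusp (hZ : ObjectwiseContractible Z)
    (hP : ∀ n, RelProjective (P.X n)) (f : P ⟶ Z.desusp) (hf : f.f 0 ≫ Z.d 1 0 = 0) :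
    Nonempty (Homotopy f 0) := by
  obtain ⟨g₀, hg₀⟩ := hZ.exists_comp_d_eq (hP 0) 1 (f.f 0)
    (by rw [Z.dFrom_eq (i := 1) (j := 0) rfl, ← Category.assoc, hf, zero_comp])
  refine ChainComplex.nonempty_homotopy_zero_of_exists_lift f (-g₀) (by simp [hg₀])
    fun n b w hw => ?_
  have hw' : w ≫ Z.d (b + 2) (b + 1) = 0 := by simpa using hw
  obtain ⟨g, hg⟩ := hZ.exists_comp_d_eq (hP n) (b + 2) w
    (by rw [Z.dFrom_eq (i := b + 2) (j := b + 1) rfl, ← Category.assoc, hw', zero_comp])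
  exact ⟨-g, by simp [hg]⟩

end ObjectwiseContractible

namespace RelQIsoCx

variable {X Y P : ChainComplex (DMod 𝔸) ℕ} {s : X ⟶ Y}

lemma exists_homotopy_comp (hs : RelQIsoCx s) (hP : ∀ n, RelProjective (P.X n)) (u : P ⟶ Y) :
    ∃ v : P ⟶ X, Nonempty (Homotopy (v ≫ s) u) :=
  homotopyCofiber.exists_homotopy_of_homotopy_comp_inr s u
    (hs.objectwiseContractible_homotopyCofiber.nonempty_homotopy_zero hP _).some

lemma nonempty_homotopy_of_comp (hs : RelQIsoCx s) (hP : ∀ n, RelProjective (P.X n))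
    {v₁ v₂ : P ⟶ X} (H : Homotopy (v₁ ≫ s) (v₂ ≫ s)) : Nonempty (Homotopy v₁ v₂) := by
  let H' : Homotopy ((v₁ - v₂) ≫ s) 0 :=
    (Homotopy.ofEq (Preadditive.sub_comp _ _ _)).trans (Homotopy.equivSubZero H)
  obtain ⟨H''⟩ := hs.objectwiseContractible_homotopyCofiber.nonempty_homotopy_zero_desusp hP _
    (homotopyCofiber.fiberLift_f_zero_comp_d s _ H')
  obtain ⟨K⟩ := homotopyCofiber.nonempty_homotopy_zero_of_homotopy_fiberLift s _ H' H''
  exact ⟨Homotopy.equivSubZero.symm K⟩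

end RelQIsoCx

lemma relQIsoW_le_isColocal :
    RelQIsoW 𝔸 ≤ ObjectProperty.isColocal (fun K => ∀ n, RelProjective (K.as.X n)) := by
  rintro X Y _ ⟨s, rfl, hs⟩ P hP
  constructor
  · intro f₁ f₂ h
    obtain ⟨u₁, rfl⟩ := (HomotopyCategory.quotient _ _).map_surjective f₁
    obtain ⟨u₂, rfl⟩ := (HomotopyCategory.quotient _ _).map_surjective f₂
    exact HomotopyCategory.eq_of_homotopy _ _
      (hs.nonempty_homotopy_of_comp hP (HomotopyCategory.homotopyOfEq _ _ h)).some
  · intro f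
    obtain ⟨u, rfl⟩ := (HomotopyCategory.quotient _ _).map_surjective f
    obtain ⟨v, ⟨H⟩⟩ := hs.exists_homotopy_comp hP u
    exact ⟨(HomotopyCategory.quotient _ _).map v,
      ((HomotopyCategory.quotient _ _).map_comp v s).symm.trans
        (HomotopyCategory.eq_of_homotopy _ _ H)⟩

/-- For a right-bounded complex `P•` of relative projective `𝔸`-modules and any
right-bounded complex `Q•`, the canonical map from homotopy classes of chain maps
`P• → Q•` to morphisms `P• → Q•` in the relative derived category is a bijection. -/
theorem morphisms_from_relProjective_complex (𝔸 : Diagram k C)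
    (P Q : ChainComplex (DMod 𝔸) ℕ) (hP : ∀ n, RelProjective (P.X n)) :
    Function.Bijective
      (fun g : (HomotopyCategory.quotient (DMod 𝔸) (ComplexShape.down ℕ)).obj P ⟶
               (HomotopyCategory.quotient (DMod 𝔸) (ComplexShape.down ℕ)).obj Q =>
        (RelQIsoW 𝔸).Q.map g) :=
  Localization.map_bijective_of_le_isColocal _ _ relQIsoW_le_isColocal hP _
end
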